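/- There exists ε₀ > 0 such that for all 0 < ε ≤ ε₀: if λ ∈ [0,∞), ν is a nonnegative integer, and u(r,θ) = u^r(r)cos(νθ) is a nonzero C² solution of D_ε u = λu on the closed unit disc, and u_O^r denotes the restriction of u^r to [1−ε, 1], then J_ν(√(8λ)·(1−ε))·(u_O^r)'(1−ε) − √(8λ)·J_ν'(√(8λ)·(1−ε))·u_O^r(1−ε) = 0, where J_ν is the Bessel function of the first kind of order ν, defined for ν ∈ ℕ₀ by the convergent series J_ν(x) = Σ_{k=0}^∞ (−1)^k/(k!·(k+ν)!)·(x/2)^(2k+ν). -/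

import Mathlib

open Real Set Filter Topology MeasureTheory

noncomputable def s0 (ε t : ℝ) : ℝ :=
  if 0 ≤ t ∧ t ≤ ε then π/2 + (t/ε) * Real.sqrt (1 - (t/ε)^2) + Real.arcsin (t/ε) else π

noncomputable def s12 (ε t : ℝ) : ℝ :=
  if 0 ≤ t ∧ t ≤ ε then -(2/3) * (1 - (t/ε)^2) ^ ((3:ℝ)/2) else 0

noncomputable def s2 (ε t : ℝ) : ℝ :=
  if 0 ≤ t ∧ t ≤ ε then
    π/8 + (1/12) * ((t/ε) * Real.sqrt (1 - (t/ε)^2) * (5 - 2*(t/ε)^2) + 3 * Real.arcsin (t/ε))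
  else π/4

noncomputable def s22 (ε t : ℝ) : ℝ :=
  if 0 ≤ t ∧ t ≤ ε then
    π/8 + (1/4) * ((t/ε) * Real.sqrt (1 - (t/ε)^2) * (2*(t/ε)^2 - 1) + Real.arcsin (t/ε))
  else π/4

noncomputable def s3 (ε t : ℝ) : ℝ :=
  if 0 ≤ t ∧ t ≤ ε then -(2/15) * (1 - (t/ε)^2) ^ ((5:ℝ)/2) else 0

noncomputable def s32 (ε t : ℝ) : ℝ :=
  if 0 ≤ t ∧ t ≤ ε then -(2/15) * (2 + 3*(t/ε)^2) * (1 - (t/ε)^2) ^ ((3:ℝ)/2) else 0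

noncomputable def phi11 (ε t : ℝ) : ℝ :=
  (1/2) * (s22 ε t * s2 ε t - s3 ε t * s12 ε t) / ((s12 ε t)^2 - s22 ε t * s0 ε t)

noncomputable def phi22 (ε t : ℝ) : ℝ :=
  (1/2) * ((s22 ε t)^2 - s32 ε t * s12 ε t) / ((s12 ε t)^2 - s22 ε t * s0 ε t)

noncomputable def phi2d (ε t : ℝ) : ℝ :=
  s12 ε t / ((s12 ε t)^2 - s22 ε t * s0 ε t)

/-- The principal Sturm–Liouville coefficient on the disc, as a function of the
radius `r`; this is `p(1−r)` in the paper's notation. -/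
noncomputable def pd (ε r0 r : ℝ) : ℝ :=
  (1/8) * (1 - ε) * Real.sign (1 - r0 - r) *
    Real.exp (∫ s in (1-ε)..r, (phi11 ε (1-s) + s * phi2d ε (1-s)) / (s * phi22 ε (1-s)))

/-- `q(1−r)` as a function of `r`. -/
noncomputable def qd (ε r0 r : ℝ) : ℝ :=
  -(pd ε r0 r / r^2) * (phi11 ε (1-r) / phi22 ε (1-r))

/-- The weight `w(1−r)` as a function of `r`. -/
noncomputable def wd (ε r0 r : ℝ) : ℝ := -pd ε r0 r / phi22 ε (1-r)

/-- The point of the plane (seen as `ℂ`) with polar coordinates `(r, θ)`. -/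
noncomputable def pol (r θ : ℝ) : ℂ := (r : ℂ) * Complex.exp ((θ : ℂ) * Complex.I)

/-- Radial partial derivative of `F` at `(r, θ)`. -/
noncomputable def Fr (F : ℂ → ℝ) (r θ : ℝ) : ℝ := deriv (fun t : ℝ => F (pol t θ)) r

/-- Second radial partial derivative of `F` at `(r, θ)`. -/
noncomputable def Frr (F : ℂ → ℝ) (r θ : ℝ) : ℝ :=
  deriv (deriv (fun t : ℝ => F (pol t θ))) r

/-- Second angular partial derivative of `F` at `(r, θ)`. -/
noncomputable def Ftt (F : ℂ → ℝ) (r θ : ℝ) : ℝ :=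
  deriv (deriv (fun s : ℝ => F (pol r s))) θ

/-- `F` is a `C²` function on the closed unit disc satisfying `D_ε F = λ F`
everywhere (expressed in polar coordinates). -/
def IsDiscSol (ε lam : ℝ) (F : ℂ → ℝ) : Prop :=
  ContDiffOn ℝ 2 F (Metric.closedBall 0 1) ∧
  ∀ r ∈ Ioc (0:ℝ) 1, ∀ θ : ℝ,
    phi11 ε (1-r) * ((1/r) * Fr F r θ + (1/r^2) * Ftt F r θ) +
      phi22 ε (1-r) * Frr F r θ + phi2d ε (1-r) * Fr F r θ = lam * F (pol r θ)

/-- The Bessel function of the first kind of (natural) order `ν`, defined by its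
power series. -/
noncomputable def besselJ (ν : ℕ) (x : ℝ) : ℝ :=
  ∑' k : ℕ, ((-1:ℝ)^k / ((k.factorial : ℝ) * ((k+ν).factorial : ℝ))) * (x/2)^(2*k+ν)

/-!
Where `1 - r > ε` the coefficients are constant (`φ₁₁ = φ₂₂ = -1/8`, `φ₂ = 0`), so on the disc of
radius `1 - ε` the equation `D_ε u = λ u` reads `-Δu / 8 = λ u`. With `x = √(8λ)`, the radial
profile `f(r) = u(r, 0)` then solves Bessel's equation `r² f'' + r f' + (x² r² - ν²) f = 0`, and so
does `J_ν(x r)`. Their Wronskian `r (J_ν(x r) f' - x J_ν'(x r) f)` has zero derivative, and it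
vanishes at `r = 0` because `f`, the restriction of `u` to a diameter, is `C²` through the centre.
Hence it vanishes at `r = 1 - ε`.
-/

theorem hasDerivAt_tsum_mul_pow {c : ℕ → ℝ} {m : ℕ → ℕ} {x R : ℝ} (hxR : |x| < R)
    (hc : Summable fun k => |c k| * m k * R ^ (m k - 1))
    (hx : Summable fun k => c k * x ^ m k) :
    HasDerivAt (fun y => ∑' k, c k * y ^ m k) (∑' k, c k * m k * x ^ (m k - 1)) x := by
  have hmem : x ∈ Metric.ball (0 : ℝ) R := by simpa using hxR
  refine hasDerivAt_tsum_of_isPreconnected (g := fun k y => c k * y ^ m k)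
    (g' := fun k y => c k * m k * y ^ (m k - 1)) hc Metric.isOpen_ball
    (convex_ball 0 R).isPreconnected (fun k y _ => ?_) (fun k y hy => ?_) hmem hx hmem
  · simpa only [mul_assoc] using (hasDerivAt_pow (m k) y).const_mul (c k)
  · have hy : |y| ≤ R := by simpa using (Metric.mem_ball.1 hy).le
    rw [norm_mul, norm_mul, norm_pow, Real.norm_eq_abs, Real.norm_eq_abs, Real.norm_eq_abs,
      Nat.abs_cast]
    gcongr

theorem sq_mul_pow_sub_two_add_mul_pow_sub_one (n : ℕ) (x : ℝ) :
    x ^ 2 * (n * ((n - 1 : ℕ) : ℝ) * x ^ (n - 1 - 1)) + x * (n * x ^ (n - 1)) = n ^ 2 * x ^ n := by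
  rcases n with _ | _ | n
  · simp
  · simp
  · simp only [Nat.add_sub_cancel, Nat.cast_add, Nat.cast_one]
    ring

theorem one_mem_Icc_zero_add_one_sq (n : ℕ) : (1 : ℝ) ∈ Icc 0 (((n : ℝ) + 1) ^ 2) :=
  ⟨zero_le_one, by nlinarith [n.cast_nonneg (α := ℝ)]⟩

theorem natCast_mem_Icc_zero_add_one_sq (n : ℕ) : (n : ℝ) ∈ Icc 0 (((n : ℝ) + 1) ^ 2) :=
  ⟨n.cast_nonneg, by nlinarith [n.cast_nonneg (α := ℝ)]⟩

theorem natCast_mul_pred_mem_Icc_zero_add_one_sq (n : ℕ) :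
    (n : ℝ) * ((n - 1 : ℕ) : ℝ) ∈ Icc 0 (((n : ℝ) + 1) ^ 2) := by
  have : ((n - 1 : ℕ) : ℝ) ≤ n := by exact_mod_cast n.sub_le 1
  exact ⟨by positivity, by nlinarith [n.cast_nonneg (α := ℝ), (n - 1).cast_nonneg (α := ℝ)]⟩

theorem hasDerivAt_mul_wronskian_eq_zero {u u' v v' : ℝ → ℝ} {u'' v'' q r : ℝ} (hr : r ≠ 0)
    (hu : HasDerivAt u (u' r) r) (hu' : HasDerivAt u' u'' r)
    (hv : HasDerivAt v (v' r) r) (hv' : HasDerivAt v' v'' r)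
    (hu_ode : r ^ 2 * u'' + r * u' r + q * u r = 0)
    (hv_ode : r ^ 2 * v'' + r * v' r + q * v r = 0) :
    HasDerivAt (fun s => s * (u s * v' s - u' s * v s)) 0 r := by
  have h : HasDerivAt (fun s => s * (u s * v' s - u' s * v s))
      (1 * (u r * v' r - u' r * v r) +
        r * ((u' r * v' r + u r * v'') - (u'' * v r + u' r * v' r))) r :=
    (hasDerivAt_id' r).mul ((hu.mul hv').sub (hu'.mul hv))
  convert h using 1
  refine (mul_right_inj' hr).1 ?_
  linear_combination v r * hu_ode - u r * hv_ode

section BesselSeries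

open scoped Nat

variable (ν : ℕ)

noncomputable def besselCoeff (k : ℕ) : ℝ :=
  (-1) ^ k / (k ! * (k + ν)! * 2 ^ (2 * k + ν))

theorem besselJ_eq_tsum (x : ℝ) :
    besselJ ν x = ∑' k, besselCoeff ν k * x ^ (2 * k + ν) := by
  unfold besselJ besselCoeff
  congr 1
  funext k
  rw [div_pow]
  field_simp

theorem abs_besselCoeff_le (k : ℕ) : |besselCoeff ν k| ≤ 1 / k ! := by
  have h : (1 : ℝ) ≤ (k + ν)! * 2 ^ (2 * k + ν) :=
    one_le_mul_of_one_le_of_one_le (by exact_mod_cast (k + ν).factorial_pos)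
      (one_le_pow₀ (by norm_num))
  rw [besselCoeff, abs_div, abs_pow, abs_neg, abs_one, one_pow, abs_of_pos (by positivity),
    mul_assoc]
  gcongr
  exact le_mul_of_one_le_right (by positivity) h

theorem besselCoeff_succ_mul (k : ℕ) :
    besselCoeff ν (k + 1) * (((2 * (k + 1) + ν : ℕ) : ℝ) ^ 2 - ν ^ 2) = -besselCoeff ν k := by
  rw [besselCoeff, besselCoeff, show k + 1 + ν = k + ν + 1 by ring, Nat.factorial_succ,
    Nat.factorial_succ, show 2 * (k + 1) + ν = 2 * k + ν + 2 by ring, pow_add]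
  push_cast
  field_simp
  ring

theorem summable_abs_besselCoeff_mul {P : ℕ → ℝ}
    (hP : ∀ n : ℕ, P n ∈ Icc 0 (((n : ℝ) + 1) ^ 2)) (j : ℕ) {R : ℝ} (hR : 0 ≤ R) :
    Summable fun k => |besselCoeff ν k| * P (2 * k + ν) * R ^ (2 * k + ν - j) := by
  set S := 4 * (R + 1)
  refine .of_nonneg_of_le (fun k => by have := (hP (2 * k + ν)).1; positivity) (fun k => ?_)
    ((Real.summable_pow_div_factorial (S ^ 2)).mul_left (S ^ ν))
  set n := 2 * k + ν
  have hP4 : P n ≤ 4 ^ n := by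
    have : (n : ℝ) + 1 ≤ 2 ^ n := by exact_mod_cast Nat.lt_two_pow_self
    calc P n ≤ ((n : ℝ) + 1) ^ 2 := (hP n).2
      _ ≤ (2 ^ n) ^ 2 := by gcongr
      _ = 4 ^ n := by rw [← pow_mul, mul_comm, pow_mul]; norm_num
  have hRn : R ^ (n - j) ≤ (R + 1) ^ n :=
    (pow_le_pow_left₀ hR (by linarith) _).trans (pow_le_pow_right₀ (by linarith) (n.sub_le j))
  calc |besselCoeff ν k| * P n * R ^ (n - j) ≤ 1 / k ! * 4 ^ n * (R + 1) ^ n := by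
        gcongr
        · exact (hP n).1
        · exact abs_besselCoeff_le ν k
    _ = S ^ ν * ((S ^ 2) ^ k / k !) := by
        simp only [S, n, mul_pow, ← pow_mul, pow_add]; ring

theorem summable_besselCoeff_mul {P : ℕ → ℝ} (hP : ∀ n : ℕ, P n ∈ Icc 0 (((n : ℝ) + 1) ^ 2))
    (j : ℕ) (x : ℝ) : Summable fun k => besselCoeff ν k * P (2 * k + ν) * x ^ (2 * k + ν - j) :=
  (summable_abs_besselCoeff_mul ν hP j (abs_nonneg x)).of_norm_bounded fun k => by
    rw [norm_mul, norm_mul, norm_pow, Real.norm_eq_abs, Real.norm_eq_abs, Real.norm_eq_abs,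
      abs_of_nonneg (hP _).1]

theorem hasSum_besselJ (x : ℝ) :
    HasSum (fun k => besselCoeff ν k * x ^ (2 * k + ν)) (besselJ ν x) := by
  rw [besselJ_eq_tsum]
  simpa using (summable_besselCoeff_mul ν one_mem_Icc_zero_add_one_sq 0 x).hasSum

theorem hasDerivAt_besselJ (x : ℝ) :
    HasDerivAt (besselJ ν)
      (∑' k, besselCoeff ν k * ((2 * k + ν : ℕ) : ℝ) * x ^ (2 * k + ν - 1)) x := by
  rw [show besselJ ν = fun y => ∑' k, besselCoeff ν k * y ^ (2 * k + ν) from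
    funext (besselJ_eq_tsum ν)]
  exact hasDerivAt_tsum_mul_pow (lt_add_one |x|)
    (summable_abs_besselCoeff_mul ν natCast_mem_Icc_zero_add_one_sq 1 (by positivity))
    (hasSum_besselJ ν x).summable

theorem deriv_besselJ :
    deriv (besselJ ν) =
      fun x => ∑' k, besselCoeff ν k * ((2 * k + ν : ℕ) : ℝ) * x ^ (2 * k + ν - 1) :=
  funext fun x => (hasDerivAt_besselJ ν x).deriv

theorem hasDerivAt_deriv_besselJ (x : ℝ) :
    HasDerivAt (deriv (besselJ ν))
      (∑' k, besselCoeff ν k * ((2 * k + ν : ℕ) : ℝ) * ((2 * k + ν - 1 : ℕ) : ℝ) *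
        x ^ (2 * k + ν - 1 - 1)) x := by
  rw [deriv_besselJ]
  refine hasDerivAt_tsum_mul_pow (c := fun k => besselCoeff ν k * ((2 * k + ν : ℕ) : ℝ))
    (m := fun k => 2 * k + ν - 1) (lt_add_one |x|) ?_
    (summable_besselCoeff_mul ν natCast_mem_Icc_zero_add_one_sq 1 x)
  refine (summable_abs_besselCoeff_mul ν natCast_mul_pred_mem_Icc_zero_add_one_sq (1 + 1)
    (R := |x| + 1) (by positivity)).congr fun k => ?_
  rw [abs_mul, Nat.abs_cast, Nat.sub_sub]
  ring

theorem besselJ_ode (x : ℝ) :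
    x ^ 2 * deriv (deriv (besselJ ν)) x + x * deriv (besselJ ν) x + (x ^ 2 - ν ^ 2) * besselJ ν x
      = 0 := by
  have hJ := hasSum_besselJ ν x
  have hJ' : HasSum (fun k => besselCoeff ν k * ((2 * k + ν : ℕ) : ℝ) * x ^ (2 * k + ν - 1))
      (deriv (besselJ ν) x) := by
    rw [(hasDerivAt_besselJ ν x).deriv]
    exact (summable_besselCoeff_mul ν natCast_mem_Icc_zero_add_one_sq 1 x).hasSum
  have hJ'' : HasSum (fun k => besselCoeff ν k * ((2 * k + ν : ℕ) : ℝ) *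
      ((2 * k + ν - 1 : ℕ) : ℝ) * x ^ (2 * k + ν - 1 - 1)) (deriv (deriv (besselJ ν)) x) := by
    rw [(hasDerivAt_deriv_besselJ ν x).deriv]
    refine ((summable_besselCoeff_mul ν natCast_mul_pred_mem_Icc_zero_add_one_sq (1 + 1) x).congr
      fun k => ?_).hasSum
    rw [Nat.sub_sub]
    ring
  have hEuler : HasSum (fun k => besselCoeff ν k * ((2 * k + ν : ℕ) : ℝ) ^ 2 * x ^ (2 * k + ν))
      (x ^ 2 * deriv (deriv (besselJ ν)) x + x * deriv (besselJ ν) x) := by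
    refine ((hJ''.mul_left (x ^ 2)).add (hJ'.mul_left x)).congr_fun fun k => ?_
    linear_combination (-besselCoeff ν k) * sq_mul_pow_sub_two_add_mul_pow_sub_one (2 * k + ν) x
  have hShift : HasSum (fun k => besselCoeff ν k * (((2 * k + ν : ℕ) : ℝ) ^ 2 - ν ^ 2) *
      x ^ (2 * k + ν)) (-(x ^ 2 * besselJ ν x)) := by
    -- the `k = 0` term vanishes and `besselCoeff_succ_mul` turns term `k + 1` into `-x²` times
    -- term `k` of the series of `J_ν`
    have h := HasSum.zero_add (f := fun k => besselCoeff ν k * (((2 * k + ν : ℕ) : ℝ) ^ 2 - ν ^ 2) *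
      x ^ (2 * k + ν)) ((hJ.mul_left (-x ^ 2)).congr_fun fun k => ?_)
    · simpa using h
    · rw [besselCoeff_succ_mul, show 2 * (k + 1) + ν = 2 * k + ν + 2 by ring, pow_add]
      ring
  have hsum := hShift.unique ((hEuler.sub (hJ.mul_left ((ν : ℝ) ^ 2))).congr_fun fun k => by ring)
  linear_combination -hsum

theorem differentiable_besselJ : Differentiable ℝ (besselJ ν) :=
  fun x => (hasDerivAt_besselJ ν x).differentiableAt

theorem differentiable_deriv_besselJ : Differentiable ℝ (deriv (besselJ ν)) :=
  fun x => (hasDerivAt_deriv_besselJ ν x).differentiableAt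

end BesselSeries

theorem besselJ_wronskian_eq_zero {f : ℝ → ℝ} {U : Set ℝ} {a x : ℝ} {ν : ℕ} (ha : 0 < a)
    (hU : IsOpen U) (haU : Icc 0 a ⊆ U) (hf : ContDiffOn ℝ 2 f U)
    (hode : ∀ r ∈ Ioo 0 a,
      r ^ 2 * deriv (deriv f) r + r * deriv f r + (x ^ 2 * r ^ 2 - ν ^ 2) * f r = 0) :
    besselJ ν (x * a) * deriv f a - x * deriv (besselJ ν) (x * a) * f a = 0 := by
  set u := fun r => besselJ ν (x * r)
  set u' := fun r => x * deriv (besselJ ν) (x * r)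
  set W := fun r => r * (u r * deriv f r - u' r * f r)
  have hu (r : ℝ) : HasDerivAt u (u' r) r :=
    ((differentiable_besselJ ν _).hasDerivAt.comp r (hasDerivAt_const_mul x)).congr_deriv
      (mul_comm _ _)
  have hu' (r : ℝ) : HasDerivAt u' (x ^ 2 * deriv (deriv (besselJ ν)) (x * r)) r :=
    (((differentiable_deriv_besselJ ν _).hasDerivAt.comp r (hasDerivAt_const_mul x)).const_mul
      x).congr_deriv (by ring)
  have hfU : ∀ r ∈ U, HasDerivAt f (deriv f r) r := fun r hr =>
    ((hf.differentiableOn (by norm_num)).differentiableAt (hU.mem_nhds hr)).hasDerivAt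
  have hf'U : ∀ r ∈ U, HasDerivAt (deriv f) (deriv (deriv f) r) r := fun r hr =>
    (((hf.deriv_of_isOpen hU (m := 1) (by norm_num)).differentiableOn
      (by norm_num)).differentiableAt (hU.mem_nhds hr)).hasDerivAt
  have hW : ContinuousOn W (Icc 0 a) := by
    have := (differentiable_besselJ ν).continuous
    have := (differentiable_deriv_besselJ ν).continuous
    have := hf.continuousOn.mono haU
    have := (hf.continuousOn_deriv_of_isOpen hU (by norm_num)).mono haU
    fun_prop
  have hW' : ∀ r ∈ Ioo 0 a, HasDerivAt W 0 r := fun r hr => by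
    have hrU := haU (Ioo_subset_Icc_self hr)
    exact hasDerivAt_mul_wronskian_eq_zero hr.1.ne' (hu r) (hu' r) (hfU r hrU) (hf'U r hrU)
      (by linear_combination besselJ_ode ν (x * r)) (hode r hr)
  obtain ⟨-, -, hWc⟩ := exists_hasDerivAt_eq_slope W (fun _ => 0) ha hW hW'
  rw [sub_zero, eq_div_iff ha.ne', zero_mul, eq_comm] at hWc
  have hWa : W a = 0 := by simpa [W] using hWc
  exact (mul_eq_zero.1 hWa).resolve_left ha.ne'

section Profile

variable {ε t : ℝ}

theorem phi11_of_lt (ht : ε < t) : phi11 ε t = -1 / 8 := by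
  have h : ¬(0 ≤ t ∧ t ≤ ε) := fun h => ht.not_ge h.2
  simp only [phi11, s22, s2, s3, s12, s0, if_neg h]
  field_simp [Real.pi_ne_zero]
  ring

theorem phi22_of_lt (ht : ε < t) : phi22 ε t = -1 / 8 := by
  have h : ¬(0 ≤ t ∧ t ≤ ε) := fun h => ht.not_ge h.2
  simp only [phi22, s22, s32, s12, s0, if_neg h]
  field_simp [Real.pi_ne_zero]
  ring

theorem phi2d_of_lt (ht : ε < t) : phi2d ε t = 0 := by
  have h : ¬(0 ≤ t ∧ t ≤ ε) := fun h => ht.not_ge h.2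
  simp [phi2d, s12, if_neg h]

end Profile

theorem pol_zero_right (r : ℝ) : pol r 0 = r := by
  simp [pol]

theorem Ftt_of_eq_mul_cos {F : ℂ → ℝ} {r a n : ℝ}
    (h : ∀ θ, F (pol r θ) = a * Real.cos (n * θ)) (θ : ℝ) : Ftt F r θ = -n ^ 2 * F (pol r θ) := by
  have h₁ (s : ℝ) : HasDerivAt (fun s => a * Real.cos (n * s)) (-(a * n) * Real.sin (n * s)) s :=
    ((hasDerivAt_const_mul n).cos.const_mul a).congr_deriv (by ring)
  have h₂ : HasDerivAt (fun s => -(a * n) * Real.sin (n * s))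
      (-n ^ 2 * (a * Real.cos (n * θ))) θ :=
    ((hasDerivAt_const_mul n).sin.const_mul _).congr_deriv (by ring)
  rw [Ftt, funext h, funext fun s => (h₁ s).deriv, h₂.deriv, h]

theorem IsDiscSol.radial_ode {ε lam : ℝ} {ν : ℕ} {F : ℂ → ℝ} {v : ℝ → ℝ}
    (hF : IsDiscSol ε lam F)
    (hFv : ∀ r ∈ Ioc (0:ℝ) 1, ∀ θ : ℝ, F (pol r θ) = v r * Real.cos (ν * θ))
    {r : ℝ} (hr : r ∈ Ioc 0 1) (hrε : ε < 1 - r) :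
    r ^ 2 * Frr F r 0 + r * Fr F r 0 + (8 * lam * r ^ 2 - ν ^ 2) * F (pol r 0) = 0 := by
  have h := hF.2 r hr 0
  rw [Ftt_of_eq_mul_cos (hFv r hr), phi11_of_lt hrε, phi22_of_lt hrε, phi2d_of_lt hrε] at h
  field_simp [hr.1.ne'] at h
  linear_combination -h

theorem contDiffOn_comp_pol_zero {F : ℂ → ℝ} (hF : ContDiffOn ℝ 2 F (Metric.closedBall 0 1)) :
    ContDiffOn ℝ 2 (fun t : ℝ => F (pol t 0)) (Ioo (-1) 1) := by
  simp only [pol_zero_right]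
  refine hF.comp Complex.ofRealCLM.contDiff.contDiffOn fun t ht => ?_
  simpa [abs_le] using (Ioo_subset_Icc_self ht)

theorem stmt18 :
    ∃ ε₀ > (0:ℝ), ∀ ε : ℝ, 0 < ε → ε ≤ ε₀ →
      ∀ (lam : ℝ), 0 ≤ lam → ∀ (ν : ℕ) (F : ℂ → ℝ) (v v' : ℝ → ℝ),
        IsDiscSol ε lam F →
        (∀ r ∈ Ioc (0:ℝ) 1, ∀ θ : ℝ, F (pol r θ) = v r * Real.cos (ν*θ)) →
        (∀ r ∈ Ioc (0:ℝ) 1, HasDerivAt v (v' r) r) →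
        (∃ z ∈ Metric.closedBall (0:ℂ) 1, F z ≠ 0) →
        besselJ ν (Real.sqrt (8*lam) * (1-ε)) * v' (1-ε) -
          Real.sqrt (8*lam) * deriv (besselJ ν) (Real.sqrt (8*lam) * (1-ε)) * v (1-ε) = 0 := by
  refine ⟨1 / 2, by norm_num, fun ε hε hε₀ lam hlam ν F v v' hF hFv hv _ => ?_⟩
  set f : ℝ → ℝ := fun t => F (pol t 0)
  have hfv : ∀ r ∈ Ioc (0:ℝ) 1, f r = v r := fun r hr => by simpa using hFv r hr 0
  have hf'v : deriv f (1 - ε) = v' (1 - ε) := by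
    refine ((hv _ ⟨by linarith, by linarith⟩).congr_of_eventuallyEq ?_).deriv
    filter_upwards [Ioo_mem_nhds (show 0 < 1 - ε by linarith) (show 1 - ε < 1 by linarith)]
      with t ht using hfv t (Ioo_subset_Ioc_self ht)
  have hode : ∀ r ∈ Ioo 0 (1 - ε), r ^ 2 * deriv (deriv f) r + r * deriv f r +
      (√(8 * lam) ^ 2 * r ^ 2 - ν ^ 2) * f r = 0 := fun r hr => by
    rw [Real.sq_sqrt (by positivity)]
    exact hF.radial_ode hFv ⟨hr.1, by linarith [hr.2]⟩ (by linarith [hr.2])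
  rw [← hfv _ ⟨by linarith, by linarith⟩, ← hf'v]
  exact besselJ_wronskian_eq_zero (by linarith) isOpen_Ioo
    (Icc_subset_Ioo (by norm_num) (by linarith)) (contDiffOn_comp_pol_zero hF.1) hode
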